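/- arXiv:1406.1287 — 2 statements merged into one kernel-verified Lean document; each statement's English description precedes it below -/
import Mathlib

section
/- Define the Lobachevsky function Λ(x) = −∫_0^x log|2 sin t| dt. For α ∈ (0, π/3), let θ = θ(α) ∈ (π, 2π) satisfy cos θ = cos α − 1/2. Then d/dα [ −2(Λ((α+θ)/2) − Λ((α−θ)/2)) ] = log|t − √(t²−1)| where t = 1 + cos α − cos 2α. -/
/-!
Write `p = (α + θ)/2`, `q = (α - θ)/2`. Locally `θ = 2π - arccos (cos α - 1/2)`, so `θ` is
differentiable, and by the chain rule the derivative is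
`log |2 sin p| (1 + θ') - log |2 sin q| (1 - θ')`. Since `cos α - cos θ = -2 sin p sin q = 1/2`,
`log |2 sin p| + log |2 sin q| = 0`, so `θ'` cancels and the derivative is
`2 log |2 sin p| = log (2 - 2 cos (α + θ))`. Expanding `cos (α + θ)`, with `sin α ≥ 0 ≥ sin θ`
fixing the sign of the square root, gives `2 - 2 cos (α + θ) = t - √(t² - 1)`.
-/

open Real intervalIntegral Set Filter Topology

theorem intervalIntegrable_log_abs_two_mul_sin (a b : ℝ) :
    IntervalIntegrable (fun t => log |2 * sin t|) MeasureTheory.volume a b := by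
  have hmero : MeromorphicOn (fun t => 2 * sin t) (uIcc a b) :=
    (analyticOnNhd_sin.const_smul (c := (2 : ℝ))).meromorphicOn
  simpa only [Real.norm_eq_abs] using hmero.intervalIntegrable_log_norm

theorem hasDerivAt_neg_integral_log_abs_two_mul_sin {x : ℝ} (hx : sin x ≠ 0) :
    HasDerivAt (fun y => -∫ t in (0 : ℝ)..y, log |2 * sin t|) (-log |2 * sin x|) x := by
  have hcont : ContinuousAt (fun t => log |2 * sin t|) x :=
    (continuous_const.mul continuous_sin).abs.continuousAt.log (by simpa using hx)
  have hmeas : Measurable fun t => log |2 * sin t| := by fun_prop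
  exact (integral_hasDerivAt_right (intervalIntegrable_log_abs_two_mul_sin 0 x)
    hmeas.aestronglyMeasurable.stronglyMeasurableAtFilter hcont).neg

theorem hasDerivAt_lobachevsky_half_add_sub_half_sub {Λ θ : ℝ → ℝ} {α : ℝ}
    (hΛ : ∀ x, sin x ≠ 0 → HasDerivAt Λ (-log |2 * sin x|) x) (hθ : DifferentiableAt ℝ θ α)
    (hcos : |cos α - cos (θ α)| = 1 / 2) :
    HasDerivAt (fun a => -2 * (Λ ((a + θ a) / 2) - Λ ((a - θ a) / 2)))
      (2 * log |2 * sin ((α + θ α) / 2)|) α := by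
  set p := (α + θ α) / 2
  set q := (α - θ α) / 2
  have hprod : |2 * sin p * (2 * sin q)| = 1 := by
    rw [show 2 * sin p * (2 * sin q) = -2 * (cos α - cos (θ α)) by rw [cos_sub_cos]; ring,
      abs_mul, hcos]
    norm_num
  have hsp : sin p ≠ 0 := by rintro h; simp [h] at hprod
  have hsq : sin q ≠ 0 := by rintro h; simp [h] at hprod
  have hlog_sum : log |2 * sin p| + log |2 * sin q| = 0 := by
    rw [← log_mul (by simpa using hsp) (by simpa using hsq), ← abs_mul, hprod, log_one]
  have hp := (hΛ p hsp).comp α (((hasDerivAt_id α).add hθ.hasDerivAt).div_const 2)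
  have hq := (hΛ q hsq).comp α (((hasDerivAt_id α).sub hθ.hasDerivAt).div_const 2)
  refine ((hp.sub hq).const_mul (-2)).congr_deriv ?_
  linear_combination (-(1 - deriv θ α)) * hlog_sum

theorem sin_neg_of_mem_Ioo_pi_two_pi {θ : ℝ} (hθ : θ ∈ Ioo π (2 * π)) : sin θ < 0 := by
  simpa [sin_sub_two_pi] using
    sin_neg_of_neg_of_neg_pi_lt (x := θ - 2 * π) (by linarith [hθ.2]) (by linarith [hθ.1])

theorem eq_two_pi_sub_arccos_cos {θ : ℝ} (hθ : θ ∈ Icc π (2 * π)) :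
    θ = 2 * π - arccos (cos θ) := by
  rw [← cos_two_pi_sub, arccos_cos (by linarith [hθ.2]) (by linarith [hθ.1])]
  ring

theorem differentiableAt_of_mem_Ioo_pi_two_pi_of_cos_eq {θ g : ℝ → ℝ} {s : Set ℝ} {α : ℝ}
    (hs : s ∈ 𝓝 α) (hθ : ∀ a ∈ s, θ a ∈ Ioo π (2 * π) ∧ cos (θ a) = g a)
    (hg : DifferentiableAt ℝ g α) : DifferentiableAt ℝ θ α := by
  have hθ_eq : (fun a => 2 * π - arccos (g a)) =ᶠ[𝓝 α] θ := by
    filter_upwards [hs] with a ha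
    rw [← (hθ a ha).2, ← eq_two_pi_sub_arccos_cos (Ioo_subset_Icc_self (hθ a ha).1)]
  obtain ⟨hθα, hcos⟩ := hθ α (mem_of_mem_nhds hs)
  have hsin := sin_neg_of_mem_Ioo_pi_two_pi hθα
  have harccos : DifferentiableAt ℝ arccos (g α) := by
    rw [differentiableAt_arccos, ← hcos]
    constructor <;> intro h <;> nlinarith [sin_sq_add_cos_sq (θ α)]
  exact ((harccos.comp α hg).const_sub _).congr_of_eventuallyEq hθ_eq.symm

theorem two_mul_sin_half_add_sq {α θ : ℝ} (hcos : cos θ = cos α - 1 / 2)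
    (hα : 0 ≤ sin α) (hθ : sin θ ≤ 0) :
    (2 * sin ((α + θ) / 2)) ^ 2 =
      (1 + cos α - cos (2 * α)) - √((1 + cos α - cos (2 * α)) ^ 2 - 1) := by
  have hsqrt : √((1 + cos α - cos (2 * α)) ^ 2 - 1) = -2 * sin α * sin θ := by
    rw [← sqrt_sq (by nlinarith : 0 ≤ -2 * sin α * sin θ)]
    congr 1
    rw [mul_pow, mul_pow, sin_sq α, sin_sq θ, hcos, cos_two_mul]
    ring
  rw [hsqrt, mul_pow, sin_sq_eq_half_sub, show 2 * ((α + θ) / 2) = α + θ by ring, cos_add, hcos,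
    cos_two_mul]
  ring

theorem mednykh_volume_derivative
    (Λ : ℝ → ℝ) (hΛ : ∀ x : ℝ, Λ x = -∫ t in (0:ℝ)..x, Real.log |2 * Real.sin t|)
    (θ : ℝ → ℝ)
    (hθ : ∀ a ∈ Set.Ioo (0:ℝ) (Real.pi / 3),
      θ a ∈ Set.Ioo Real.pi (2 * Real.pi) ∧ Real.cos (θ a) = Real.cos a - 1 / 2)
    (α : ℝ) (hα : α ∈ Set.Ioo (0:ℝ) (Real.pi / 3)) :
    HasDerivAt (fun a : ℝ => -2 * (Λ ((a + θ a) / 2) - Λ ((a - θ a) / 2)))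
      (Real.log |(1 + Real.cos α - Real.cos (2 * α)) -
        Real.sqrt ((1 + Real.cos α - Real.cos (2 * α)) ^ 2 - 1)|) α := by
  obtain ⟨hθα, hcos⟩ := hθ α hα
  have hΛ' : ∀ x, sin x ≠ 0 → HasDerivAt Λ (-log |2 * sin x|) x := by
    rw [funext hΛ]
    exact fun x hx => hasDerivAt_neg_integral_log_abs_two_mul_sin hx
  have hθ_diff : DifferentiableAt ℝ θ α :=
    differentiableAt_of_mem_Ioo_pi_two_pi_of_cos_eq (isOpen_Ioo.mem_nhds hα) hθ (by fun_prop)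
  have hsinα : 0 ≤ sin α := sin_nonneg_of_nonneg_of_le_pi hα.1.le (by linarith [hα.2, pi_pos])
  convert hasDerivAt_lobachevsky_half_add_sub_half_sub hΛ' hθ_diff (by rw [hcos]; norm_num) using 1
  rw [← two_mul_sin_half_add_sq hcos hsinα (sin_neg_of_mem_Ioo_pi_two_pi hθα).le, abs_pow,
    log_pow]
  norm_num
end

section
/- Let s_N be a sequence of integers with s_N/N → σ ∈ (0, 1/2]. Then (1/N)·Σ_{k=1}^{s_N} log|2 sin(kπ/N)| → ∫_0^{σ} log|2 sin(πt)| dt = −Λ(σπ)/π as N → ∞. -/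
open Real Finset Filter intervalIntegral

open MeasureTheory Topology

/-!
The integrand `f t = log |2 sin (π t)|` is increasing on `(0, 1/2]`, and it is integrable there
despite the logarithmic singularity at `0`, being the logarithm of the norm of a real-analytic
function. For an increasing integrand, the right-endpoint Riemann sum of mesh `δ` over `(0, mδ]`
lies between `∫₀^{mδ} f` and `∫_δ^{mδ} f + δ f(mδ)`; both bounds tend to `∫₀^σ f` by continuity
of the primitive, as `δ f(mδ) ≤ δ f(1/2) → 0`. The terms with `k > N/2`, present only when
`σ = 1/2`, are `o(N)` in number and bounded, so they do not contribute. The identity with `Λ` is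
the substitution `u = π t`.
-/

section MonotoneRiemannSum

variable {g : ℝ → ℝ} {a b c δ : ℝ}

theorem integral_le_mul_of_monotoneOn (hab : a ≤ b) (hg : MonotoneOn g (Set.Ioc a b))
    (hi : IntervalIntegrable g volume a b) : ∫ t in a..b, g t ≤ (b - a) * g b :=
  calc ∫ t in a..b, g t ≤ ∫ _ in a..b, g b :=
        integral_mono_on_of_le_Ioo hab hi intervalIntegrable_const fun _ ht =>
          hg ⟨ht.1, ht.2.le⟩ ⟨ht.1.trans ht.2, le_rfl⟩ ht.2.le
    _ = (b - a) * g b := by rw [intervalIntegral.integral_const, smul_eq_mul]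

theorem mul_le_integral_of_monotoneOn (hab : a ≤ b) (hg : MonotoneOn g (Set.Icc a b))
    (hi : IntervalIntegrable g volume a b) : (b - a) * g a ≤ ∫ t in a..b, g t :=
  calc (b - a) * g a = ∫ _ in a..b, g a := by rw [intervalIntegral.integral_const, smul_eq_mul]
    _ ≤ ∫ t in a..b, g t :=
        integral_mono_on_of_le_Ioo hab intervalIntegrable_const hi fun _ ht =>
          hg ⟨le_rfl, hab⟩ ⟨ht.1.le, ht.2.le⟩ ht.1.le

theorem IntervalIntegrable.mono_set_of_le (hi : IntervalIntegrable g volume a b) (hab : a ≤ b)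
    {a' b' : ℝ} (ha : a ≤ a') (hab' : a' ≤ b') (hb : b' ≤ b) : IntervalIntegrable g volume a' b' :=
  hi.mono_set (by rw [Set.uIcc_of_le hab, Set.uIcc_of_le hab']; exact Set.Icc_subset_Icc ha hb)

theorem integral_le_riemannSum_of_monotoneOn (hg : MonotoneOn g (Set.Ioc 0 c))
    (hi : IntervalIntegrable g volume 0 c) (hδ : 0 < δ) :
    ∀ m : ℕ, m * δ ≤ c → ∫ t in 0..m * δ, g t ≤ δ * ∑ k ∈ Icc 1 m, g (k * δ)
  | 0, _ => by simp
  | m + 1, hm => by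
    push_cast at hm ⊢
    have hstep : m * δ ≤ (m + 1) * δ := by nlinarith
    have hc : 0 ≤ c := le_trans (by positivity) hm
    have hcell := integral_le_mul_of_monotoneOn hstep
      (hg.mono (Set.Ioc_subset_Ioc (by positivity) hm))
      (hi.mono_set_of_le hc (by positivity) hstep hm)
    have hsplit := integral_add_adjacent_intervals
      (hi.mono_set_of_le hc le_rfl (by positivity) (hstep.trans hm))
      (hi.mono_set_of_le hc (by positivity) hstep hm)
    have ih := integral_le_riemannSum_of_monotoneOn hg hi hδ m (hstep.trans hm)
    rw [sum_Icc_succ_top (by omega), Nat.cast_succ]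
    nlinarith

theorem riemannSum_le_integral_add_of_monotoneOn (hg : MonotoneOn g (Set.Ioc 0 c))
    (hi : IntervalIntegrable g volume 0 c) (hδ : 0 < δ) {m : ℕ} (hm1 : 1 ≤ m) :
    m * δ ≤ c → δ * ∑ k ∈ Icc 1 m, g (k * δ) ≤ (∫ t in δ..m * δ, g t) + δ * g (m * δ) := by
  induction m, hm1 using Nat.le_induction with
  | base => intro _; simp
  | succ m hm1 ih =>
    intro hm
    push_cast at hm ⊢
    have hstep : m * δ ≤ (m + 1) * δ := by nlinarith
    have h1 : δ ≤ m * δ := le_mul_of_one_le_left hδ.le (by exact_mod_cast hm1)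
    have hc : 0 ≤ c := le_trans (by positivity) hm
    have hcell := mul_le_integral_of_monotoneOn hstep
      (hg.mono (Set.Icc_subset_Ioc (hδ.trans_le h1) hm))
      (hi.mono_set_of_le hc (by positivity) hstep hm)
    have hsplit := integral_add_adjacent_intervals
      (hi.mono_set_of_le hc hδ.le h1 (hstep.trans hm))
      (hi.mono_set_of_le hc (by positivity) hstep hm)
    have := ih (hstep.trans hm)
    rw [sum_Icc_succ_top (by omega), Nat.cast_succ]
    nlinarith

theorem tendsto_riemannSum_of_monotoneOn {ι : Type*} {l : Filter ι} [l.NeBot] {σ : ℝ}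
    (hg : MonotoneOn g (Set.Ioc 0 c)) (hi : IntervalIntegrable g volume 0 c) (hσ : 0 < σ)
    {δ : ι → ℝ} {m : ι → ℕ} (hδ : Tendsto δ l (𝓝[>] 0)) (hmc : ∀ᶠ i in l, m i * δ i ≤ c)
    (hm : Tendsto (fun i => m i * δ i) l (𝓝 σ)) :
    Tendsto (fun i => δ i * ∑ k ∈ Icc 1 (m i), g (k * δ i)) l (𝓝 (∫ t in 0..σ, g t)) := by
  set F : ℝ → ℝ := fun u => ∫ t in 0..u, g t
  have hσc : σ ≤ c := le_of_tendsto hm hmc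
  have hc : 0 < c := hσ.trans_le hσc
  have hF : ContinuousOn F (Set.Icc 0 c) := by
    simpa [Set.uIcc_of_le hc.le] using
      continuousOn_primitive_interval ((intervalIntegrable_iff' (f := g)).1 hi)
  have hδ0 : Tendsto δ l (𝓝 0) := tendsto_nhds_of_tendsto_nhdsWithin hδ
  have hδpos : ∀ᶠ i in l, 0 < δ i := eventually_mem_of_tendsto_nhdsWithin hδ
  have hδc : ∀ᶠ i in l, δ i < c := hδ0.eventually (eventually_lt_nhds hc)
  have hm1 : ∀ᶠ i in l, 1 ≤ m i := by
    filter_upwards [hm.eventually (eventually_gt_nhds hσ)] with i hi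
    by_contra h0
    simp_all
  have hFm : Tendsto (fun i => F (m i * δ i)) l (𝓝 (F σ)) :=
    (hF σ ⟨hσ.le, hσc⟩).tendsto.comp <| tendsto_nhdsWithin_iff.2 ⟨hm, by
      filter_upwards [hmc, hδpos] with i hic hip using ⟨by positivity, hic⟩⟩
  have hFδ : Tendsto (fun i => F (δ i)) l (𝓝 0) := by
    have h := (hF 0 ⟨le_rfl, hc.le⟩).tendsto.comp <| tendsto_nhdsWithin_iff.2 ⟨hδ0, by
      filter_upwards [hδpos, hδc] with i hip hic using ⟨hip.le, hic.le⟩⟩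
    rwa [show F 0 = 0 from integral_same] at h
  have hupper : Tendsto (fun i => F (m i * δ i) - F (δ i) + δ i * g c) l (𝓝 (F σ)) := by
    simpa using (hFm.sub hFδ).add (hδ0.mul_const (g c))
  refine tendsto_of_tendsto_of_tendsto_of_le_of_le' hFm hupper ?_ ?_
  · filter_upwards [hδpos, hmc] with i hip hic
    exact integral_le_riemannSum_of_monotoneOn hg hi hip (m i) hic
  · filter_upwards [hδpos, hδc, hmc, hm1] with i hip hδc hic hi1
    have hpos : 0 < m i * δ i := by
      have : (1 : ℝ) ≤ m i := by exact_mod_cast hi1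
      positivity
    have hgc : g (m i * δ i) ≤ g c := hg ⟨hpos, hic⟩ ⟨hc, le_rfl⟩ hic
    have hsub : F (m i * δ i) - F (δ i) = ∫ t in δ i..m i * δ i, g t :=
      integral_interval_sub_left (hi.mono_set_of_le hc.le le_rfl hpos.le hic)
        (hi.mono_set_of_le hc.le le_rfl hip.le hδc.le)
    have := riemannSum_le_integral_add_of_monotoneOn hg hi hip hi1 hic
    rw [hsub]
    nlinarith

theorem tendsto_riemannSum_Ioc_of_abs_le {ι : Type*} {l : Filter ι} {C : ℝ} {δ : ι → ℝ}
    {m n : ι → ℕ} (hδ : ∀ᶠ i in l, 0 ≤ δ i)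
    (hg : ∀ᶠ i in l, ∀ k ∈ Ioc (m i) (n i), |g (k * δ i)| ≤ C)
    (hmn : Tendsto (fun i => ((n i - m i : ℕ) : ℝ) * δ i) l (𝓝 0)) :
    Tendsto (fun i => δ i * ∑ k ∈ Ioc (m i) (n i), g (k * δ i)) l (𝓝 0) := by
  refine squeeze_zero_norm' ?_ (by simpa using hmn.mul_const C)
  filter_upwards [hδ, hg] with i hδi hgi
  calc ‖δ i * ∑ k ∈ Ioc (m i) (n i), g (k * δ i)‖
      = δ i * |∑ k ∈ Ioc (m i) (n i), g (k * δ i)| := by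
        rw [Real.norm_eq_abs, abs_mul, abs_of_nonneg hδi]
    _ ≤ δ i * ((n i - m i : ℕ) * C) := by
        gcongr
        refine (abs_sum_le_sum_abs _ _).trans ?_
        simpa [Nat.card_Ioc] using sum_le_card_nsmul _ _ C hgi
    _ = ((n i - m i : ℕ) : ℝ) * δ i * C := by ring

end MonotoneRiemannSum

noncomputable def logTwoSinPi (t : ℝ) : ℝ := log |2 * sin (π * t)|

theorem intervalIntegrable_logTwoSinPi (a b : ℝ) : IntervalIntegrable logTwoSinPi volume a b := by
  have h : AnalyticOnNhd ℝ (fun t => 2 * sin (π * t)) (Set.uIcc a b) := fun _ _ =>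
    analyticAt_const.mul (analyticAt_sin.comp (analyticAt_const.mul analyticAt_id))
  convert h.meromorphicOn.intervalIntegrable_log using 1
  exact funext fun t => log_abs _

theorem monotoneOn_logTwoSinPi : MonotoneOn logTwoSinPi (Set.Ioc 0 (1 / 2)) := by
  intro s hs t ht hst
  have hsin : 0 < sin (π * s) := sin_pos_of_pos_of_lt_pi (by nlinarith [pi_pos, hs.1])
    (by nlinarith [pi_pos, hs.2])
  have hst' : sin (π * s) ≤ sin (π * t) :=
    sin_le_sin_of_le_of_le_pi_div_two (by nlinarith [pi_pos, hs.1]) (by nlinarith [pi_pos, ht.2])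
      (by nlinarith [pi_pos])
  simp only [logTwoSinPi, log_abs]
  exact log_le_log (by positivity) (by linarith)

theorem one_le_two_mul_sin_pi_mul {t : ℝ} (h1 : 1 / 4 ≤ t) (h2 : t ≤ 3 / 4) :
    1 ≤ 2 * sin (π * t) := by
  wlog ht : t ≤ 1 / 2 generalizing t
  · have := this (t := 1 - t) (by linarith) (by linarith) (by linarith)
    rwa [mul_sub, mul_one, sin_pi_sub] at this
  have := mul_le_sin (x := π * t) (by nlinarith [pi_pos]) (by nlinarith [pi_pos])
  rw [← mul_assoc, div_mul_cancel₀ _ pi_ne_zero] at this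
  linarith

theorem abs_logTwoSinPi_le {t : ℝ} (h1 : 1 / 4 ≤ t) (h2 : t ≤ 3 / 4) :
    |logTwoSinPi t| ≤ log 2 := by
  have hsin := one_le_two_mul_sin_pi_mul h1 h2
  rw [logTwoSinPi, log_abs, abs_of_nonneg (log_nonneg hsin)]
  exact log_le_log (by linarith) (by linarith [sin_le_one (π * t)])

theorem integral_logTwoSinPi (x : ℝ) :
    ∫ t in 0..x, logTwoSinPi t = (∫ u in 0..x * π, log |2 * sin u|) / π := by
  have h := integral_comp_mul_left (fun u => log |2 * sin u|) pi_ne_zero (a := 0) (b := x)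
  rw [mul_zero, smul_eq_mul] at h
  rw [← inv_mul_eq_div, mul_comm x]
  exact h

theorem sum_Icc_one_add_sum_Ioc {M : Type*} [AddCommMonoid M] (f : ℕ → M) {m n : ℕ}
    (h : m ≤ n) : ∑ k ∈ Icc 1 m, f k + ∑ k ∈ Ioc m n, f k = ∑ k ∈ Icc 1 n, f k := by
  rw [show Icc 1 n = Ioc 0 n from Icc_add_one_left_eq_Ioc 0 n,
    show Icc 1 m = Ioc 0 m from Icc_add_one_left_eq_Ioc 0 m, sum_Ioc_consecutive f m.zero_le h]

theorem tendsto_natCast_div_two_div_atTop :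
    Tendsto (fun N : ℕ => ((N / 2 : ℕ) : ℝ) / N) atTop (𝓝 (1 / 2)) := by
  have hlow : Tendsto (fun N : ℕ => 1 / 2 - 1 / (N : ℝ)) atTop (𝓝 (1 / 2)) := by
    simpa using tendsto_one_div_atTop_nhds_zero_nat.const_sub (1 / 2 : ℝ)
  refine tendsto_of_tendsto_of_tendsto_of_le_of_le' hlow tendsto_const_nhds ?_ ?_
  all_goals
    filter_upwards [eventually_gt_atTop 0] with N hN
    have hN' : (0 : ℝ) < N := by exact_mod_cast hN
    have h2 : ((N / 2 : ℕ) : ℝ) * 2 ≤ N := by exact_mod_cast Nat.div_mul_le_self N 2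
    have h2' : (N : ℝ) ≤ ((N / 2 : ℕ) : ℝ) * 2 + 1 := by
      exact_mod_cast (by omega : N ≤ N / 2 * 2 + 1)
  · rw [le_div_iff₀ hN', sub_mul, one_div_mul_cancel hN'.ne']; linarith
  · rw [div_le_iff₀ hN']; linarith

section CutAtHalf

variable {s : ℕ → ℕ} {σ : ℝ}

theorem natCast_min_div_two_mul_one_div_le (n N : ℕ) :
    ((min n (N / 2) : ℕ) : ℝ) * (1 / N) ≤ 1 / 2 := by
  rw [mul_one_div]
  calc ((min n (N / 2) : ℕ) : ℝ) / N ≤ ((N / 2 : ℕ) : ℝ) / N := by gcongr; exact min_le_right _ _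
    _ ≤ (N / 2 : ℝ) / N := by gcongr; exact Nat.cast_div_le
    _ ≤ 1 / 2 := by rw [div_right_comm]; gcongr; exact div_self_le_one _

theorem tendsto_natCast_min_div_two_mul_one_div (hσ : σ ≤ 1 / 2)
    (hs : Tendsto (fun N => (s N : ℝ) / N) atTop (𝓝 σ)) :
    Tendsto (fun N => ((min (s N) (N / 2) : ℕ) : ℝ) * (1 / N)) atTop (𝓝 σ) := by
  have := hs.min tendsto_natCast_div_two_div_atTop
  rw [min_eq_left hσ] at this
  refine this.congr fun N => ?_
  rw [mul_one_div, Nat.cast_min, min_div_div_right N.cast_nonneg]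

theorem eventually_abs_logTwoSinPi_le (hσ : σ < 3 / 4)
    (hs : Tendsto (fun N => (s N : ℝ) / N) atTop (𝓝 σ)) :
    ∀ᶠ N in atTop, ∀ k ∈ Ioc (min (s N) (N / 2)) (s N), |logTwoSinPi (k * (1 / N))| ≤ log 2 := by
  filter_upwards [eventually_gt_atTop 0, hs.eventually (eventually_le_nhds hσ)]
    with N hN hsN k hk
  rw [mem_Ioc] at hk
  have hN' : (0 : ℝ) < N := by exact_mod_cast hN
  have h2k : (N : ℝ) ≤ 2 * k := by exact_mod_cast (by omega : N ≤ 2 * k)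
  have hks : (k : ℝ) ≤ s N := by exact_mod_cast hk.2
  rw [mul_one_div]
  refine abs_logTwoSinPi_le ?_ (le_trans ?_ hsN)
  · rw [le_div_iff₀ hN']; linarith
  · gcongr

theorem tendsto_riemannSum_logTwoSinPi (hσ : σ ∈ Set.Ioc 0 (1 / 2))
    (hs : Tendsto (fun N => (s N : ℝ) / N) atTop (𝓝 σ)) :
    Tendsto (fun N : ℕ => 1 / (N : ℝ) * ∑ k ∈ Icc 1 (s N), logTwoSinPi (k * (1 / N))) atTop
      (𝓝 (∫ t in 0..σ, logTwoSinPi t)) := by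
  set m : ℕ → ℕ := fun N => min (s N) (N / 2)
  have hδ : Tendsto (fun N : ℕ => 1 / (N : ℝ)) atTop (𝓝[>] 0) := by
    simpa only [one_div, Function.comp_def] using
      tendsto_inv_atTop_nhdsGT_zero.comp tendsto_natCast_atTop_atTop
  have hm := tendsto_natCast_min_div_two_mul_one_div hσ.2 hs
  have head := tendsto_riemannSum_of_monotoneOn monotoneOn_logTwoSinPi
    (intervalIntegrable_logTwoSinPi 0 (1 / 2)) hσ.1 hδ
    (Eventually.of_forall fun N => natCast_min_div_two_mul_one_div_le (s N) N) hm
  have hrate : Tendsto (fun N => ((s N - m N : ℕ) : ℝ) * (1 / N)) atTop (𝓝 0) := by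
    have := (hs.congr fun N => div_eq_mul_one_div _ _).sub hm
    rw [sub_self] at this
    refine this.congr fun N => ?_
    rw [← sub_mul, Nat.cast_sub (min_le_left (s N) (N / 2))]
  have tail := tendsto_riemannSum_Ioc_of_abs_le (Eventually.of_forall fun N => by positivity)
    (eventually_abs_logTwoSinPi_le (by linarith [hσ.2]) hs) hrate
  have := head.add tail
  rw [add_zero] at this
  exact this.congr fun N => by
    rw [← mul_add, sum_Icc_one_add_sum_Ioc _ (min_le_left (s N) (N / 2))]

end CutAtHalf

theorem riemann_sum_limit_lobachevsky
    (Λ : ℝ → ℝ) (hΛ : ∀ x : ℝ, Λ x = -∫ t in (0:ℝ)..x, Real.log |2 * Real.sin t|)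
    (s : ℕ → ℕ) (σ : ℝ) (hσ : σ ∈ Set.Ioc (0:ℝ) (1 / 2))
    (hs : Filter.Tendsto (fun N : ℕ => (s N : ℝ) / N) Filter.atTop (nhds σ)) :
    Filter.Tendsto
        (fun N : ℕ => (1 / (N : ℝ)) * ∑ k ∈ Finset.Icc 1 (s N),
          Real.log |2 * Real.sin (k * Real.pi / N)|)
        Filter.atTop (nhds (∫ t in (0:ℝ)..σ, Real.log |2 * Real.sin (Real.pi * t)|)) ∧
      (∫ t in (0:ℝ)..σ, Real.log |2 * Real.sin (Real.pi * t)|) = -Λ (σ * Real.pi) / Real.pi := by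
  refine ⟨?_, by rw [hΛ, neg_neg]; exact integral_logTwoSinPi σ⟩
  refine (tendsto_riemannSum_logTwoSinPi hσ hs).congr fun N => congrArg _ <|
    sum_congr rfl fun k _ => ?_
  rw [logTwoSinPi, show π * (k * (1 / N)) = k * π / N by ring]
end
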